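/- Let f : ℝ² → ℝ be a continuous ℤ²-periodic function with f > 0, defining a metric g = f²(dx²+dy²) on the unit square torus ℝ²/ℤ². Define the biaxial projection P(f)(x,y) = g_f(x) + h_f(y), where g_f(x) = ∫₀¹ f(x,y) dy − m and h_f(y) = ∫₀¹ f(x,y) dx − m, with m the mean of f. Then area(g) − sys(g)² ≥ var(f) + (1/16)‖P(f)‖₁², where ‖P(f)‖₁ = ∫_{[0,1]²} |P(f)(x,y)| dx dy. -/

import Mathlib

open MeasureTheory intervalIntegral

/-- A path `γ : [0,1] → ℂ ≅ ℝ²` is piecewise `C¹` with derivative `γ'` if it is continuous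
on `[0,1]` and there is a finite partition `0 = t₀ < t₁ < ⋯ < tₙ = 1` such that on each
closed piece the derivative of `γ` extends to a continuous function agreeing with `γ'`
in the interior of the piece. -/
def IsPiecewiseC1Path (γ γ' : ℝ → ℂ) : Prop :=
  ContinuousOn γ (Set.Icc 0 1) ∧
  ∃ (n : ℕ) (t : ℕ → ℝ), 0 < n ∧ t 0 = 0 ∧ t n = 1 ∧
    (∀ i < n, t i < t (i + 1)) ∧
    ∀ i < n, ∃ d : ℝ → ℂ, ContinuousOn d (Set.Icc (t i) (t (i + 1))) ∧
      ∀ x ∈ Set.Ioo (t i) (t (i + 1)), HasDerivAt γ (d x) x ∧ γ' x = d x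

/-- The length of a path `γ` with derivative `γ'` in the conformal metric `f²(dx²+dy²)`. -/
noncomputable def gLength (f : ℂ → ℝ) (γ γ' : ℝ → ℂ) : ℝ :=
  ∫ t in (0:ℝ)..1, f (γ t) * ‖γ' t‖

/-- The systole of the metric `f²(dx²+dy²)` on the torus `ℝ²/L`: the infimum of lengths of
piecewise `C¹` paths whose endpoint difference is a nonzero lattice vector. -/
noncomputable def systole (L : Set ℂ) (f : ℂ → ℝ) : ℝ :=
  sInf { ℓ : ℝ | ∃ γ γ' : ℝ → ℂ, IsPiecewiseC1Path γ γ' ∧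
    γ 1 - γ 0 ∈ L ∧ γ 1 - γ 0 ≠ 0 ∧ ℓ = gLength f γ γ' }

/-!
The vertical loop through `x` and the horizontal loop through `y` have lengths `m + g_f x` and
`m + h_f y`, so `sys ≤ m + min g_f` and `sys ≤ m + min h_f`. A continuous function `u` of mean
zero on `[0,1]` has `‖u‖₁ ≤ -2 min u`, and `‖P f‖₁ ≤ ‖g_f‖₁ + ‖h_f‖₁` by the triangle inequality,
so `sys + ‖P f‖₁ / 4 ≤ m`. Finally `area = var + m²`, and `m² - sys² ≥ (m - sys)²` as `sys ≥ 0`.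
-/

open Complex

section Systole

variable {f : ℂ → ℝ} {L : Set ℂ}

lemma gLength_nonneg (hf : ∀ z, 0 ≤ f z) (γ γ' : ℝ → ℂ) : 0 ≤ gLength f γ γ' :=
  intervalIntegral.integral_nonneg zero_le_one fun _ _ => mul_nonneg (hf _) (norm_nonneg _)

lemma systole_nonneg (hf : ∀ z, 0 ≤ f z) : 0 ≤ systole L f :=
  Real.sInf_nonneg <| by
    rintro ℓ ⟨γ, γ', -, -, -, rfl⟩
    exact gLength_nonneg hf γ γ'

lemma systole_le_gLength (hf : ∀ z, 0 ≤ f z) {γ γ' : ℝ → ℂ} (hγ : IsPiecewiseC1Path γ γ')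
    (hL : γ 1 - γ 0 ∈ L) (hne : γ 1 - γ 0 ≠ 0) : systole L f ≤ gLength f γ γ' := by
  refine csInf_le ⟨0, ?_⟩ ⟨γ, γ', hγ, hL, hne, rfl⟩
  rintro ℓ ⟨γ, γ', -, -, -, rfl⟩
  exact gLength_nonneg hf γ γ'

lemma isPiecewiseC1Path_line (a v : ℂ) :
    IsPiecewiseC1Path (fun t : ℝ => a + t * v) (fun _ => v) := by
  refine ⟨by fun_prop, 1, fun i => i, one_pos, by simp, by simp, fun i _ => by simp,
    fun i _ => ⟨fun _ => v, continuousOn_const, fun t _ => ⟨?_, rfl⟩⟩⟩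
  simpa using ((ofRealCLM.hasDerivAt (x := t)).mul_const v).const_add a

lemma systole_le_norm_mul_intervalIntegral (hf : ∀ z, 0 ≤ f z) (a : ℂ) {v : ℂ} (hv : v ∈ L)
    (hv0 : v ≠ 0) : systole L f ≤ ‖v‖ * ∫ t in (0:ℝ)..1, f (a + t * v) := by
  refine (systole_le_gLength hf (isPiecewiseC1Path_line a v) (by simpa using hv)
    (by simpa using hv0)).trans_eq ?_
  simp only [gLength, intervalIntegral.integral_mul_const, mul_comm]

end Systole

noncomputable def unitSquare : Measure (ℝ × ℝ) :=
  (volume.restrict (Set.Ioc 0 1)).prod (volume.restrict (Set.Ioc 0 1))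

instance : IsProbabilityMeasure (volume.restrict (Set.Ioc (0:ℝ) 1)) :=
  ⟨by simp⟩

instance : IsProbabilityMeasure unitSquare := by
  unfold unitSquare; infer_instance

lemma Continuous.integrable_unitSquare {G : ℝ × ℝ → ℝ} (hG : Continuous G) :
    Integrable G unitSquare := by
  rw [unitSquare, Measure.prod_restrict, ← Measure.volume_eq_prod]
  exact (hG.continuousOn.integrableOn_compact (isCompact_Icc.prod isCompact_Icc)).mono_set
    (Set.prod_mono Set.Ioc_subset_Icc_self Set.Ioc_subset_Icc_self)

lemma integral_unitSquare {G : ℝ × ℝ → ℝ} (hG : Continuous G) :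
    ∫ p, G p ∂unitSquare = ∫ x in (0:ℝ)..1, ∫ y in (0:ℝ)..1, G (x, y) := by
  simp only [intervalIntegral.integral_of_le zero_le_one]
  exact integral_prod G hG.integrable_unitSquare

lemma integral_unitSquare_swap {G : ℝ × ℝ → ℝ} (hG : Continuous G) :
    ∫ p, G p ∂unitSquare = ∫ y in (0:ℝ)..1, ∫ x in (0:ℝ)..1, G (x, y) := by
  rw [unitSquare, ← integral_prod_swap]
  exact integral_unitSquare (hG.comp continuous_swap)

lemma integral_sub_integral_sq {Ω : Type*} [MeasurableSpace Ω] {μ : Measure Ω}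
    [IsProbabilityMeasure μ] {X : Ω → ℝ} (hX : MemLp X 2 μ) :
    ∫ ω, (X ω - ∫ ω', X ω' ∂μ) ^ 2 ∂μ = ∫ ω, X ω ^ 2 ∂μ - (∫ ω, X ω ∂μ) ^ 2 := by
  rw [← ProbabilityTheory.variance_eq_integral hX.aemeasurable,
    ProbabilityTheory.variance_eq_sub hX]
  rfl

/-- At a minimum point `x₀` of `u` we have `u x₀ ≤ 0`, hence `|u| ≤ u - 2 u x₀`. -/
lemma exists_intervalIntegral_abs_le_of_intervalIntegral_eq_zero {u : ℝ → ℝ} {a b : ℝ}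
    (hab : a < b) (hu : ContinuousOn u (Set.Icc a b)) (h0 : ∫ x in a..b, u x = 0) :
    ∃ x₀ ∈ Set.Icc a b, ∫ x in a..b, |u x| ≤ -2 * (b - a) * u x₀ := by
  obtain ⟨x₀, hx₀, hmin⟩ := isCompact_Icc.exists_isMinOn (Set.nonempty_Icc.2 hab.le) hu
  have hu' : IntervalIntegrable u volume a b := hu.intervalIntegrable_of_Icc hab.le
  have hmin_nonpos : u x₀ ≤ 0 := by
    have := intervalIntegral.integral_mono_on hab.le intervalIntegrable_const hu'
      fun x hx => (hmin hx : u x₀ ≤ u x)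
    rw [h0, intervalIntegral.integral_const, smul_eq_mul] at this
    nlinarith
  refine ⟨x₀, hx₀, ?_⟩
  calc ∫ x in a..b, |u x| ≤ ∫ x in a..b, (u x - 2 * u x₀) := by
        refine intervalIntegral.integral_mono_on hab.le
          (hu.abs.intervalIntegrable_of_Icc hab.le) (hu'.sub intervalIntegrable_const)
          fun x hx => ?_
        have : u x₀ ≤ u x := hmin hx
        rcases abs_cases (u x) with ⟨h, -⟩ | ⟨h, -⟩ <;> linarith
    _ = -2 * (b - a) * u x₀ := by
        rw [intervalIntegral.integral_sub hu' intervalIntegrable_const, h0,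
          intervalIntegral.integral_const, smul_eq_mul]
        ring

lemma intervalIntegral_intervalIntegral_abs_add_le {g h : ℝ → ℝ} (hg : Continuous g)
    (hh : Continuous h) :
    ∫ x in (0:ℝ)..1, ∫ y in (0:ℝ)..1, |g x + h y| ≤
      (∫ x in (0:ℝ)..1, |g x|) + ∫ y in (0:ℝ)..1, |h y| := by
  have hg' : Continuous fun p : ℝ × ℝ => |g p.1| := by fun_prop
  have hh' : Continuous fun p : ℝ × ℝ => |h p.2| := by fun_prop
  calc ∫ x in (0:ℝ)..1, ∫ y in (0:ℝ)..1, |g x + h y|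
      = ∫ p, |g p.1 + h p.2| ∂unitSquare :=
        (integral_unitSquare (G := fun p => |g p.1 + h p.2|) (by fun_prop)).symm
    _ ≤ ∫ p, (|g p.1| + |h p.2|) ∂unitSquare :=
        integral_mono (Continuous.integrable_unitSquare (by fun_prop))
          (hg'.add hh').integrable_unitSquare fun p => abs_add_le _ _
    _ = (∫ x in (0:ℝ)..1, |g x|) + ∫ y in (0:ℝ)..1, |h y| := by
        rw [integral_add hg'.integrable_unitSquare hh'.integrable_unitSquare,
          integral_unitSquare hg', integral_unitSquare_swap hh']
        simp

lemma exists_intervalIntegral_abs_marginal_add_le {G : ℝ × ℝ → ℝ} (hG : Continuous G)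
    {g h : ℝ → ℝ} (hg : ∀ x, g x = (∫ y in (0:ℝ)..1, G (x, y)) - ∫ p, G p ∂unitSquare)
    (hh : ∀ y, h y = (∫ x in (0:ℝ)..1, G (x, y)) - ∫ p, G p ∂unitSquare) :
    ∃ x₀ y₀, ∫ x in (0:ℝ)..1, ∫ y in (0:ℝ)..1, |g x + h y| ≤ -2 * g x₀ - 2 * h y₀ := by
  have hgc : Continuous g := by rw [funext hg]; fun_prop
  have hhc : Continuous h := by rw [funext hh]; fun_prop
  have hg0 : ∫ x in (0:ℝ)..1, g x = 0 := by
    simp only [hg]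
    rw [intervalIntegral.integral_sub (Continuous.intervalIntegrable (by fun_prop) 0 1)
      intervalIntegrable_const, ← integral_unitSquare hG]
    simp
  have hh0 : ∫ y in (0:ℝ)..1, h y = 0 := by
    simp only [hh]
    rw [intervalIntegral.integral_sub (Continuous.intervalIntegrable (by fun_prop) 0 1)
      intervalIntegrable_const, ← integral_unitSquare_swap hG]
    simp
  obtain ⟨x₀, -, hx₀⟩ :=
    exists_intervalIntegral_abs_le_of_intervalIntegral_eq_zero one_pos hgc.continuousOn hg0
  obtain ⟨y₀, -, hy₀⟩ :=
    exists_intervalIntegral_abs_le_of_intervalIntegral_eq_zero one_pos hhc.continuousOn hh0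
  refine ⟨x₀, y₀, (intervalIntegral_intervalIntegral_abs_add_le hgc hhc).trans ?_⟩
  linarith

theorem loewner_biaxial_second_defect_general
    (f : ℂ → ℝ) (hf : Continuous f) (hfpos : ∀ z, 0 < f z)
    (L : Set ℂ) (hL : L = {z : ℂ | ∃ m n : ℤ, z = (m : ℂ) + (n : ℂ) * Complex.I})
    (area m var : ℝ)
    (hm : m = ∫ x in (0:ℝ)..1, ∫ y in (0:ℝ)..1, f ((x : ℂ) + (y : ℂ) * Complex.I))
    (harea : area = ∫ x in (0:ℝ)..1, ∫ y in (0:ℝ)..1,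
      (f ((x : ℂ) + (y : ℂ) * Complex.I)) ^ 2)
    (hvar : var = ∫ x in (0:ℝ)..1, ∫ y in (0:ℝ)..1,
      (f ((x : ℂ) + (y : ℂ) * Complex.I) - m) ^ 2)
    (gf hf' : ℝ → ℝ)
    (hgf : ∀ x : ℝ, gf x = (∫ y in (0:ℝ)..1, f ((x : ℂ) + (y : ℂ) * Complex.I)) - m)
    (hhf : ∀ y : ℝ, hf' y = (∫ x in (0:ℝ)..1, f ((x : ℂ) + (y : ℂ) * Complex.I)) - m)
    (P1 : ℝ)
    (hP1 : P1 = ∫ x in (0:ℝ)..1, ∫ y in (0:ℝ)..1, |gf x + hf' y|) :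
    area - systole L f ^ 2 ≥ var + (1 / 16) * P1 ^ 2 := by
  have hF : Continuous fun p : ℝ × ℝ => f (p.1 + p.2 * I) := by fun_prop
  have hmean : ∫ p, f (p.1 + p.2 * I) ∂unitSquare = m := by rw [integral_unitSquare hF, hm]
  have harea_var : area = var + m ^ 2 := by
    have := integral_sub_integral_sq
      ((memLp_two_iff_integrable_sq hF.aestronglyMeasurable).2 (hF.pow 2).integrable_unitSquare)
    rw [hmean, integral_unitSquare (G := fun p => (f (p.1 + p.2 * I) - m) ^ 2) (by fun_prop),
      integral_unitSquare (G := fun p => f (p.1 + p.2 * I) ^ 2) (by fun_prop)] at this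
    rw [harea, hvar, this]
    ring
  obtain ⟨x₀, y₀, hP1_le⟩ := exists_intervalIntegral_abs_marginal_add_le hF (g := gf) (h := hf')
    (fun x => by rw [hmean]; exact hgf x) (fun y => by rw [hmean]; exact hhf y)
  rw [← hP1] at hP1_le
  have hf0 : ∀ z, 0 ≤ f z := fun z => (hfpos z).le
  have hI : I ∈ L := hL ▸ ⟨0, 1, by simp⟩
  have h1 : (1 : ℂ) ∈ L := hL ▸ ⟨1, 0, by simp⟩
  have hsys_vert : systole L f ≤ m + gf x₀ := by
    rw [hgf, add_sub_cancel]
    simpa using systole_le_norm_mul_intervalIntegral hf0 x₀ hI I_ne_zero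
  have hsys_horiz : systole L f ≤ m + hf' y₀ := by
    rw [hhf, add_sub_cancel]
    simpa [add_comm] using systole_le_norm_mul_intervalIntegral hf0 (y₀ * I) h1 one_ne_zero
  have hP1_nonneg : 0 ≤ P1 := hP1 ▸ intervalIntegral.integral_nonneg zero_le_one fun x _ =>
    intervalIntegral.integral_nonneg zero_le_one fun y _ => abs_nonneg _
  have hsys_le : systole L f + P1 / 4 ≤ m := by linarith
  nlinarith [systole_nonneg (L := L) hf0]

/-- **Loewner's torus inequality with second defect via the biaxial projection.**
On the unit square torus `ℝ²/ℤ²`, with `g_f(x) = ∫₀¹ f(x,y)dy − m`, `h_f(y) = ∫₀¹ f(x,y)dx − m`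
and biaxial projection `P(f)(x,y) = g_f(x) + h_f(y)`, every metric `f²(dx²+dy²)` satisfies
`area(g) − sys(g)² ≥ var(f) + (1/16)‖P(f)‖₁²`. -/
theorem loewner_biaxial_second_defect
    (f : ℂ → ℝ) (hf : Continuous f) (hfpos : ∀ z, 0 < f z)
    (L : Set ℂ) (hL : L = {z : ℂ | ∃ m n : ℤ, z = (m : ℂ) + (n : ℂ) * Complex.I})
    (hper : ∀ z ∈ L, ∀ x : ℂ, f (x + z) = f x)
    (area m var : ℝ)
    (hm : m = ∫ x in (0:ℝ)..1, ∫ y in (0:ℝ)..1, f ((x : ℂ) + (y : ℂ) * Complex.I))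
    (harea : area = ∫ x in (0:ℝ)..1, ∫ y in (0:ℝ)..1,
      (f ((x : ℂ) + (y : ℂ) * Complex.I)) ^ 2)
    (hvar : var = ∫ x in (0:ℝ)..1, ∫ y in (0:ℝ)..1,
      (f ((x : ℂ) + (y : ℂ) * Complex.I) - m) ^ 2)
    (gf hf' : ℝ → ℝ)
    (hgf : ∀ x : ℝ, gf x = (∫ y in (0:ℝ)..1, f ((x : ℂ) + (y : ℂ) * Complex.I)) - m)
    (hhf : ∀ y : ℝ, hf' y = (∫ x in (0:ℝ)..1, f ((x : ℂ) + (y : ℂ) * Complex.I)) - m)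
    (P1 : ℝ)
    (hP1 : P1 = ∫ x in (0:ℝ)..1, ∫ y in (0:ℝ)..1, |gf x + hf' y|) :
    area - systole L f ^ 2 ≥ var + (1 / 16) * P1 ^ 2 :=
  loewner_biaxial_second_defect_general f hf hfpos L hL area m var hm harea hvar gf hf' hgf hhf P1
    hP1
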